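/- Let f₁,…,f_N : ℝ^{m×n} → ℝ be differentiable and suppose there exists L_* > 0 such that ‖∇f_i(X) − ∇f_i(Y)‖_* ≤ L_*‖X − Y‖ for all X, Y ∈ ℝ^{m×n} and all i (spectral norm on the right); set f := (1/N)∑_{i=1}^N f_i. Let λ ∈ [0,1), η > 0, and let X_i, M_i, V_i, D_i ∈ ℝ^{m×n} (i = 1,…,N) satisfy: ‖D_i‖ ≤ 1 and ⟨V_i, D_i⟩ = ‖V_i‖_* for each i; (1/N)∑_{i=1}^N V_i = (1/N)∑_{i=1}^N M_i; and ‖X_{[N]} − 1_N ⊗ X̄‖ ≤ √N λ η/(1−λ), where X̄ is the average of the X_i. Then, with X̄⁺ := X̄ − η D̄ where D̄ := (1/N)∑_{i=1}^N D_i, it holds that f(X̄⁺) ≤ f(X̄) − η‖(1/N)∑_{i=1}^N ∇f_i(X_i)‖_* + 2η‖∇F(X_{[N]}) − M_{[N]}‖_* + 2η‖V_{[N]} − 1_N ⊗ V̄‖_* + (√N λ/(1−λ) + 1/2) L_* η², where ∇F(X_{[N]}) := [∇f₁(X₁)ᵀ,…,∇f_N(X_N)ᵀ]ᵀ and V̄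 := (1/N)∑_{i=1}^N V_i. -/

import Mathlib

/-!
The nuclear norm is dual to the spectral norm: `tr (Aᵀ B) ≤ ‖A‖_* ‖B‖`, with equality at the
polar factor of `A`. So a gradient that is `L`-Lipschitz from the spectral to the nuclear norm
gives the descent lemma `f (X + W) ≤ f X + ⟨∇f X, W⟩ + L/2 ‖W‖²`, and the average `f` of the `fᵢ`
inherits this property. At `X̄` with step `-η D̄`, `‖D̄‖ ≤ 1`, it remains to bound `⟨∇f X̄, D̄⟩`
from below. Replacing `∇f X̄` by `ḡ = (1/N) ∑ ∇fᵢ(Xᵢ)` costs at most `L maxᵢ ‖X̄ - Xᵢ‖`, and each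
block of a stacked matrix has spectral and nuclear norm at most those of the stack. Finally `Dᵢ`
is a dual element of `Vᵢ`, so `⟨ḡ, Dᵢ⟩ ≥ ‖ḡ‖_* - 2 ‖ḡ - Vᵢ‖_*`, and
`‖ḡ - Vᵢ‖_* ≤ ‖ḡ - M̄‖_* + ‖V̄ - Vᵢ‖_*` because `V̄ = M̄`.
-/

open Matrix Kronecker

/-- Spectral norm: ℓ²→ℓ² operator norm of a real matrix. -/
noncomputable def specNorm {ι κ : Type*} [Fintype ι] [Fintype κ] [DecidableEq κ]
    (A : Matrix ι κ ℝ) : ℝ :=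
  ‖LinearMap.toContinuousLinearMap (Matrix.toEuclideanLin A)‖

open scoped ComplexOrder in
/-- The positive semidefinite square root (Mathlib's former `Matrix.PosSemidef.sqrt`). -/
noncomputable def Matrix.PosSemidef.sqrt {n 𝕜 : Type*} [Fintype n] [DecidableEq n] [RCLike 𝕜]
    {A : Matrix n n 𝕜} (hA : A.PosSemidef) : Matrix n n 𝕜 :=
  hA.1.eigenvectorUnitary.1 * diagonal ((↑) ∘ (√·) ∘ hA.1.eigenvalues) *
    (star hA.1.eigenvectorUnitary : Matrix n n 𝕜)

/-- Nuclear norm: trace of the positive semidefinite square root of `Aᵀ * A`. -/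
noncomputable def nucNorm {ι κ : Type*} [Fintype ι] [Fintype κ] [DecidableEq κ]
    (A : Matrix ι κ ℝ) : ℝ :=
  Matrix.trace (Matrix.posSemidef_conjTranspose_mul_self A).sqrt

/-- Frobenius norm. -/
noncomputable def frobNorm {ι κ : Type*} [Fintype ι] [Fintype κ] (A : Matrix ι κ ℝ) : ℝ :=
  Real.sqrt (∑ i, ∑ j, (A i j) ^ 2)

/-- Trace inner product `⟨A, B⟩ = trace (Aᵀ B)`. -/
noncomputable def tin {ι κ : Type*} [Fintype ι] [Fintype κ] (A B : Matrix ι κ ℝ) : ℝ :=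
  Matrix.trace (Aᵀ * B)

/-- Vertical stacking of `N` matrices of size `m × n`. -/
def vstack {N m n : ℕ} (Y : Fin N → Matrix (Fin m) (Fin n) ℝ) :
    Matrix (Fin N × Fin m) (Fin n) ℝ :=
  fun p j => Y p.1 p.2 j

open scoped Matrix.Norms.L2Operator

section TraceInner

variable {ι κ : Type*} [Fintype ι] [Fintype κ]

theorem tin_eq_sum (A B : Matrix ι κ ℝ) : tin A B = ∑ k, ∑ i, A i k * B i k := by
  simp [tin, Matrix.trace, Matrix.mul_apply]

theorem tin_sub_left (A B C : Matrix ι κ ℝ) : tin (A - B) C = tin A C - tin B C := by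
  simp [tin, Matrix.sub_mul, Matrix.trace_sub]

theorem tin_add_left (A B C : Matrix ι κ ℝ) : tin (A + B) C = tin A C + tin B C := by
  simp [tin, Matrix.add_mul, Matrix.trace_add]

theorem tin_smul_left (c : ℝ) (A B : Matrix ι κ ℝ) : tin (c • A) B = c * tin A B := by
  simp [tin, Matrix.trace_smul]

theorem tin_smul_right (c : ℝ) (A B : Matrix ι κ ℝ) : tin A (c • B) = c * tin A B := by
  simp [tin, Matrix.trace_smul]

theorem tin_neg_right (A B : Matrix ι κ ℝ) : tin A (-B) = -tin A B := by
  simp [tin, Matrix.trace_neg]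

theorem tin_sum_left {σ : Type*} (s : Finset σ) (A : σ → Matrix ι κ ℝ) (B : Matrix ι κ ℝ) :
    tin (∑ i ∈ s, A i) B = ∑ i ∈ s, tin (A i) B := by
  simp [tin, Matrix.transpose_sum, Matrix.sum_mul, Matrix.trace_sum]

theorem tin_sum_right {σ : Type*} (s : Finset σ) (A : Matrix ι κ ℝ) (B : σ → Matrix ι κ ℝ) :
    tin A (∑ i ∈ s, B i) = ∑ i ∈ s, tin A (B i) := by
  simp [tin, Matrix.mul_sum, Matrix.trace_sum]

theorem tin_mul_left {ρ : Type*} [Fintype ρ] (P : Matrix ρ ι ℝ) (S : Matrix ι κ ℝ)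
    (B : Matrix ρ κ ℝ) : tin (P * S) B = tin S (Pᵀ * B) := by
  simp [tin, Matrix.transpose_mul, Matrix.mul_assoc]

theorem tin_mul_right_of_mul_transpose_eq_one [DecidableEq κ] {U : Matrix κ κ ℝ} (hU : U * Uᵀ = 1)
    (A B : Matrix ι κ ℝ) : tin (A * U) (B * U) = tin A B := by
  rw [tin, Matrix.transpose_mul, Matrix.mul_assoc, Matrix.trace_mul_comm, Matrix.mul_assoc,
    Matrix.mul_assoc, hU, Matrix.mul_one, tin]

end TraceInner

section SingularValues

variable {ι κ : Type*} [Fintype ι] [Fintype κ] [DecidableEq κ]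

theorem specNorm_eq_norm (A : Matrix ι κ ℝ) : specNorm A = ‖A‖ := rfl

theorem sqrt_sum_sq_col_le_norm (M : Matrix ι κ ℝ) (k : κ) : √(∑ i, M i k ^ 2) ≤ ‖M‖ := by
  have h := M.l2_opNorm_mulVec (EuclideanSpace.single k 1)
  rw [PiLp.norm_single, norm_one, mul_one, EuclideanSpace.norm_eq] at h
  simpa [Matrix.mulVec_single_one, Matrix.col] using h

theorem norm_le_one_of_transpose_mul_self_eq_diagonal {Q : Matrix ι κ ℝ} {v : κ → ℝ}
    (hQ : Qᵀ * Q = Matrix.diagonal v) (hv : ∀ k, |v k| ≤ 1) : ‖Q‖ ≤ 1 := by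
  have h : ‖Q‖ * ‖Q‖ ≤ 1 := by
    rw [← Q.l2_opNorm_conjTranspose_mul_self, Matrix.conjTranspose_eq_transpose_of_trivial, hQ,
      Matrix.l2_opNorm_diagonal]
    exact (pi_norm_le_iff_of_nonneg zero_le_one).2 hv
  nlinarith [norm_nonneg Q]

theorem norm_le_one_of_transpose_mul_self_eq_one {U : Matrix ι κ ℝ} (hU : Uᵀ * U = 1) :
    ‖U‖ ≤ 1 :=
  norm_le_one_of_transpose_mul_self_eq_diagonal (v := 1)
    (by rw [hU]; exact Matrix.diagonal_one.symm)
    fun _ => by simp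

noncomputable def rightSingularVectors (A : Matrix ι κ ℝ) : Matrix κ κ ℝ :=
  (Matrix.posSemidef_conjTranspose_mul_self A).1.eigenvectorUnitary

/-- Unsorted, and indexed like the columns of `rightSingularVectors A`. -/
noncomputable def singularValues (A : Matrix ι κ ℝ) (k : κ) : ℝ :=
  √((Matrix.posSemidef_conjTranspose_mul_self A).1.eigenvalues k)

theorem singularValues_nonneg (A : Matrix ι κ ℝ) (k : κ) : 0 ≤ singularValues A k :=
  Real.sqrt_nonneg _

theorem nucNorm_eq_sum_singularValues (A : Matrix ι κ ℝ) :
    nucNorm A = ∑ k, singularValues A k := by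
  rw [nucNorm, Matrix.PosSemidef.sqrt, Matrix.trace_mul_cycle, Unitary.coe_star_mul_self,
    Matrix.one_mul, Matrix.trace_diagonal]
  rfl

theorem transpose_mul_rightSingularVectors (A : Matrix ι κ ℝ) :
    (rightSingularVectors A)ᵀ * rightSingularVectors A = 1 := by
  simpa only [rightSingularVectors, Unitary.coe_star, Matrix.star_eq_conjTranspose,
    Matrix.conjTranspose_eq_transpose_of_trivial] using Unitary.coe_star_mul_self
    (Matrix.posSemidef_conjTranspose_mul_self A).1.eigenvectorUnitary

theorem rightSingularVectors_mul_transpose (A : Matrix ι κ ℝ) :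
    rightSingularVectors A * (rightSingularVectors A)ᵀ = 1 := by
  simpa only [rightSingularVectors, Unitary.coe_star, Matrix.star_eq_conjTranspose,
    Matrix.conjTranspose_eq_transpose_of_trivial] using Unitary.coe_mul_star_self
    (Matrix.posSemidef_conjTranspose_mul_self A).1.eigenvectorUnitary

theorem gram_mul_rightSingularVectors (A : Matrix ι κ ℝ) :
    (A * rightSingularVectors A)ᵀ * (A * rightSingularVectors A) =
      Matrix.diagonal fun k => singularValues A k ^ 2 := by
  have hA := Matrix.posSemidef_conjTranspose_mul_self A
  have h := hA.1.conjStarAlgAut_star_eigenvectorUnitary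
  rw [Unitary.conjStarAlgAut_star_apply, Matrix.star_eq_conjTranspose,
    Matrix.conjTranspose_eq_transpose_of_trivial] at h
  simp only [singularValues, Real.sq_sqrt (hA.eigenvalues_nonneg _)]
  rw [Matrix.transpose_mul, rightSingularVectors]
  simp only [Matrix.mul_assoc] at h ⊢
  exact h

end SingularValues

section NuclearNorm

variable {ι κ : Type*} [Fintype ι] [Fintype κ] [DecidableEq κ]

theorem nucNorm_nonneg (A : Matrix ι κ ℝ) : 0 ≤ nucNorm A := by
  rw [nucNorm_eq_sum_singularValues]
  exact Finset.sum_nonneg fun k _ => singularValues_nonneg A k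

theorem sqrt_sum_sq_col_mul_rightSingularVectors (A : Matrix ι κ ℝ) (k : κ) :
    √(∑ i, (A * rightSingularVectors A) i k ^ 2) = singularValues A k := by
  have h := congrFun (congrFun (gram_mul_rightSingularVectors A) k) k
  rw [Matrix.diagonal_apply_eq, Matrix.mul_apply] at h
  simp only [Matrix.transpose_apply, ← sq] at h
  rw [h, Real.sqrt_sq (singularValues_nonneg A k)]

theorem tin_le_nucNorm_mul_norm (A B : Matrix ι κ ℝ) : tin A B ≤ nucNorm A * ‖B‖ := by
  set U := rightSingularVectors A
  have hU : ‖U‖ ≤ 1 :=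
    norm_le_one_of_transpose_mul_self_eq_one (transpose_mul_rightSingularVectors A)
  rw [← tin_mul_right_of_mul_transpose_eq_one (rightSingularVectors_mul_transpose A), tin_eq_sum,
    nucNorm_eq_sum_singularValues, Finset.sum_mul]
  refine Finset.sum_le_sum fun k _ => ?_
  calc ∑ i, (A * U) i k * (B * U) i k
      ≤ √(∑ i, (A * U) i k ^ 2) * √(∑ i, (B * U) i k ^ 2) := Real.sum_mul_le_sqrt_mul_sqrt _ _ _
    _ ≤ singularValues A k * ‖B‖ := by
      rw [sqrt_sum_sq_col_mul_rightSingularVectors]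
      gcongr
      · exact singularValues_nonneg A k
      calc √(∑ i, (B * U) i k ^ 2) ≤ ‖B * U‖ := sqrt_sum_sq_col_le_norm _ k
        _ ≤ ‖B‖ * ‖U‖ := Matrix.l2_opNorm_mul B U
        _ ≤ ‖B‖ := mul_le_of_le_one_right (norm_nonneg B) hU

/-- The witness is the polar factor `A V Σ⁺ Vᵀ`, where `Σ⁺` inverts the nonzero singular values
(through `0⁻¹ = 0`). -/
theorem exists_norm_le_one_tin_eq_nucNorm (A : Matrix ι κ ℝ) :
    ∃ B : Matrix ι κ ℝ, ‖B‖ ≤ 1 ∧ tin A B = nucNorm A := by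
  set U := rightSingularVectors A
  set σ := singularValues A
  set Q := A * U * Matrix.diagonal fun k => (σ k)⁻¹
  have hQ : Qᵀ * Q = Matrix.diagonal fun k => (σ k * (σ k)⁻¹) ^ 2 := by
    rw [Matrix.transpose_mul, Matrix.diagonal_transpose, Matrix.mul_assoc,
      ← Matrix.mul_assoc (A * U)ᵀ, gram_mul_rightSingularVectors, Matrix.diagonal_mul_diagonal,
      Matrix.diagonal_mul_diagonal]
    congr 1; ext k; ring
  refine ⟨Q * Uᵀ, ?_, ?_⟩
  · have hUt : ‖Uᵀ‖ ≤ 1 := norm_le_one_of_transpose_mul_self_eq_one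
      (by rw [Matrix.transpose_transpose, rightSingularVectors_mul_transpose])
    have hσ : ∀ k, |(σ k * (σ k)⁻¹) ^ 2| ≤ 1 := fun k => by
      rcases eq_or_ne (σ k) 0 with h | h <;> simp [h]
    calc ‖Q * Uᵀ‖ ≤ ‖Q‖ * ‖Uᵀ‖ := Matrix.l2_opNorm_mul _ _
      _ ≤ 1 := mul_le_one₀ (norm_le_one_of_transpose_mul_self_eq_diagonal hQ hσ) (norm_nonneg _) hUt
  · rw [← tin_mul_right_of_mul_transpose_eq_one (rightSingularVectors_mul_transpose A),
      Matrix.mul_assoc _ Uᵀ U, transpose_mul_rightSingularVectors, Matrix.mul_one, tin,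
      ← Matrix.mul_assoc, gram_mul_rightSingularVectors, Matrix.diagonal_mul_diagonal,
      Matrix.trace_diagonal, nucNorm_eq_sum_singularValues]
    exact Finset.sum_congr rfl fun k _ => by rw [sq, mul_self_mul_inv]

theorem abs_tin_le_nucNorm_mul_norm (A B : Matrix ι κ ℝ) : |tin A B| ≤ nucNorm A * ‖B‖ := by
  refine abs_le.2 ⟨?_, tin_le_nucNorm_mul_norm A B⟩
  have h := tin_le_nucNorm_mul_norm A (-B)
  rw [tin_neg_right, norm_neg] at h
  linarith

theorem abs_tin_le_nucNorm_of_norm_le_one {A B : Matrix ι κ ℝ} (hB : ‖B‖ ≤ 1) :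
    |tin A B| ≤ nucNorm A :=
  (abs_tin_le_nucNorm_mul_norm A B).trans (mul_le_of_le_one_right (nucNorm_nonneg A) hB)

theorem nucNorm_add_le (A B : Matrix ι κ ℝ) : nucNorm (A + B) ≤ nucNorm A + nucNorm B := by
  obtain ⟨D, hD, hAB⟩ := exists_norm_le_one_tin_eq_nucNorm (A + B)
  rw [← hAB, tin_add_left]
  gcongr <;> exact (le_abs_self _).trans (abs_tin_le_nucNorm_of_norm_le_one hD)

theorem nucNorm_smul_le (r : ℝ) (A : Matrix ι κ ℝ) : nucNorm (r • A) ≤ |r| * nucNorm A := by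
  obtain ⟨D, hD, hrA⟩ := exists_norm_le_one_tin_eq_nucNorm (r • A)
  rw [← hrA, tin_smul_left]
  calc r * tin A D ≤ |r| * |tin A D| := by rw [← abs_mul]; exact le_abs_self _
    _ ≤ |r| * nucNorm A := by gcongr; exact abs_tin_le_nucNorm_of_norm_le_one hD

theorem nucNorm_zero : nucNorm (0 : Matrix ι κ ℝ) = 0 := by
  refine le_antisymm ?_ (nucNorm_nonneg 0)
  simpa using nucNorm_smul_le 0 (0 : Matrix ι κ ℝ)

noncomputable def nucSeminorm : Seminorm ℝ (Matrix ι κ ℝ) :=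
  Seminorm.ofSMulLE nucNorm nucNorm_zero nucNorm_add_le nucNorm_smul_le

theorem nucNorm_sub_comm (A B : Matrix ι κ ℝ) : nucNorm (A - B) = nucNorm (B - A) :=
  map_sub_rev nucSeminorm A B

theorem nucNorm_mul_le [DecidableEq ι] {ρ : Type*} [Fintype ρ] [DecidableEq ρ] (P : Matrix ρ ι ℝ)
    (S : Matrix ι κ ℝ) : nucNorm (P * S) ≤ ‖P‖ * nucNorm S := by
  obtain ⟨D, hD, hPS⟩ := exists_norm_le_one_tin_eq_nucNorm (P * S)
  rw [← hPS, tin_mul_left]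
  calc tin S (Pᵀ * D) ≤ nucNorm S * ‖Pᵀ * D‖ := tin_le_nucNorm_mul_norm _ _
    _ ≤ nucNorm S * (‖P‖ * 1) := by
      gcongr
      · exact nucNorm_nonneg S
      calc ‖Pᵀ * D‖ ≤ ‖Pᵀ‖ * ‖D‖ := Matrix.l2_opNorm_mul _ _
        _ ≤ ‖P‖ * 1 := by
          rw [← Matrix.conjTranspose_eq_transpose_of_trivial, Matrix.l2_opNorm_conjTranspose]
          gcongr
    _ = ‖P‖ * nucNorm S := by ring

theorem tin_sub_nucNorm_sub_le_tin {G G' D : Matrix ι κ ℝ} (hD : ‖D‖ ≤ 1) :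
    tin G' D - nucNorm (G - G') ≤ tin G D := by
  have h := (abs_le.1 (abs_tin_le_nucNorm_of_norm_le_one (A := G - G') hD)).1
  rw [tin_sub_left] at h
  linarith

theorem nucNorm_sub_two_mul_nucNorm_sub_le_tin {G V D : Matrix ι κ ℝ} (hD : ‖D‖ ≤ 1)
    (hVD : tin V D = nucNorm V) : nucNorm G - 2 * nucNorm (G - V) ≤ tin G D := by
  have htri : nucNorm G ≤ nucNorm V + nucNorm (G - V) := by
    simpa using nucNorm_add_le V (G - V)
  linarith [tin_sub_nucNorm_sub_le_tin (G := G) (G' := V) hD]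

end NuclearNorm

theorem one_submatrix_mul_id {ι κ ρ : Type*} [Fintype ρ] [DecidableEq ρ] (r : ι → ρ)
    (S : Matrix ρ κ ℝ) : (1 : Matrix ρ ρ ℝ).submatrix r id * S = S.submatrix r id := by
  simpa using Matrix.one_submatrix_mul r (Equiv.refl ρ) S

section RowSelection

variable {ι κ ρ : Type*} [Fintype ι] [Fintype κ] [Fintype ρ] [DecidableEq ι] [DecidableEq κ]
  [DecidableEq ρ]

theorem norm_one_submatrix_le {r : ι → ρ} (hr : Function.Injective r) :
    ‖(1 : Matrix ρ ρ ℝ).submatrix r id‖ ≤ 1 := by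
  rw [← Matrix.l2_opNorm_conjTranspose, Matrix.conjTranspose_eq_transpose_of_trivial]
  refine norm_le_one_of_transpose_mul_self_eq_one ?_
  rw [Matrix.transpose_transpose, Matrix.transpose_submatrix, Matrix.transpose_one,
    one_submatrix_mul_id, Matrix.submatrix_submatrix]
  exact Matrix.submatrix_one r hr

theorem norm_submatrix_le {r : ι → ρ} (hr : Function.Injective r) (S : Matrix ρ κ ℝ) :
    ‖S.submatrix r id‖ ≤ ‖S‖ := by
  rw [← one_submatrix_mul_id]
  exact (Matrix.l2_opNorm_mul _ _).trans
    (mul_le_of_le_one_left (norm_nonneg S) (norm_one_submatrix_le hr))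

theorem nucNorm_submatrix_le {r : ι → ρ} (hr : Function.Injective r) (S : Matrix ρ κ ℝ) :
    nucNorm (S.submatrix r id) ≤ nucNorm S := by
  rw [← one_submatrix_mul_id]
  exact (nucNorm_mul_le _ _).trans
    (mul_le_of_le_one_left (nucNorm_nonneg S) (norm_one_submatrix_le hr))

end RowSelection

section Stacking

variable {N m n : ℕ}

theorem norm_sub_le_norm_vstack_sub (Y Z : Fin N → Matrix (Fin m) (Fin n) ℝ) (i : Fin N) :
    ‖Y i - Z i‖ ≤ ‖vstack Y - vstack Z‖ :=
  norm_submatrix_le (Prod.mk_right_injective i) (vstack Y - vstack Z)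

theorem nucNorm_sub_le_nucNorm_vstack_sub (Y Z : Fin N → Matrix (Fin m) (Fin n) ℝ) (i : Fin N) :
    nucNorm (Y i - Z i) ≤ nucNorm (vstack Y - vstack Z) :=
  nucNorm_submatrix_le (Prod.mk_right_injective i) (vstack Y - vstack Z)

end Stacking

section Averages

variable {N : ℕ}

theorem Seminorm.inv_natCast_smul_sum_le {E : Type*} [AddCommGroup E] [Module ℝ E]
    (p : Seminorm ℝ E) (hN : 0 < N) {A : Fin N → E} {r : ℝ} (h : ∀ i, p (A i) ≤ r) :
    p ((N : ℝ)⁻¹ • ∑ i, A i) ≤ r := by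
  have hN' : (0 : ℝ) < N := Nat.cast_pos.2 hN
  rw [map_smul_eq_mul, Real.norm_eq_abs, abs_of_pos (inv_pos.2 hN'), inv_mul_le_iff₀ hN']
  calc p (∑ i, A i) ≤ ∑ i, p (A i) :=
        Finset.le_sum_of_subadditive p (map_zero p).le (map_add_le_add p) _ _
    _ ≤ ∑ _i : Fin N, r := Finset.sum_le_sum fun i _ => h i
    _ = N * r := by simp

theorem le_inv_natCast_mul_sum (hN : 0 < N) {a : Fin N → ℝ} {r : ℝ} (h : ∀ i, r ≤ a i) :
    r ≤ (N : ℝ)⁻¹ * ∑ i, a i := by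
  have hN' : (0 : ℝ) < N := Nat.cast_pos.2 hN
  rw [le_inv_mul_iff₀ hN']
  calc N * r = ∑ _i : Fin N, r := by simp
    _ ≤ ∑ i, a i := Finset.sum_le_sum fun i _ => h i

end Averages

theorem apply_one_le_of_hasDerivAt_le_affine {φ φ' : ℝ → ℝ} (hφ : ∀ t, HasDerivAt φ (φ' t) t)
    {K : ℝ} (hK : ∀ t ∈ Set.Icc (0 : ℝ) 1, φ' t ≤ φ' 0 + K * t) : φ 1 ≤ φ 0 + φ' 0 + K / 2 := by
  set ψ : ℝ → ℝ := fun t => φ t - t * φ' 0 - K / 2 * t ^ 2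
  have hψ : ∀ t, HasDerivAt ψ (φ' t - φ' 0 - K * t) t := fun t => by
    have h := ((hφ t).fun_sub ((hasDerivAt_id' t).mul_const (φ' 0))).fun_sub
      ((hasDerivAt_pow 2 t).const_mul (K / 2))
    exact h.congr_deriv (by norm_num; ring)
  have hanti : AntitoneOn ψ (Set.Icc 0 1) :=
    antitoneOn_of_hasDerivWithinAt_nonpos (convex_Icc 0 1)
      (fun t _ => (hψ t).continuousAt.continuousWithinAt) (fun t _ => (hψ t).hasDerivWithinAt)
      fun t ht => by linarith [hK t (interior_subset ht)]
  have h := hanti (by norm_num : (0 : ℝ) ∈ Set.Icc 0 1) (by norm_num) zero_le_one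
  simp only [ψ] at h
  linarith

section Descent

variable {ι κ : Type*} [Fintype ι] [Fintype κ] [DecidableEq κ]

theorem descent_lemma {f : Matrix ι κ ℝ → ℝ} {g : Matrix ι κ ℝ → Matrix ι κ ℝ}
    (hf : ∀ X V, HasDerivAt (fun t : ℝ => f (X + t • V)) (tin (g X) V) 0) {L : ℝ}
    (hg : ∀ X Y, nucNorm (g X - g Y) ≤ L * ‖X - Y‖) (X W : Matrix ι κ ℝ) :
    f (X + W) ≤ f X + tin (g X) W + L / 2 * ‖W‖ ^ 2 := by
  have hline : ∀ t : ℝ, HasDerivAt (fun t : ℝ => f (X + t • W)) (tin (g (X + t • W)) W) t :=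
    fun t => by
      have h := HasDerivAt.comp_sub_const t t (by rw [sub_self]; exact hf (X + t • W) W)
      have e : (fun s : ℝ => f (X + t • W + (s - t) • W)) = fun s => f (X + s • W) := by
        funext s
        rw [add_assoc, ← add_smul, add_sub_cancel]
      rwa [e] at h
  have hslope : ∀ t ∈ Set.Icc (0 : ℝ) 1,
      tin (g (X + t • W)) W ≤ tin (g (X + (0 : ℝ) • W)) W + L * ‖W‖ ^ 2 * t := by
    rintro t ⟨ht, -⟩
    rw [← sub_le_iff_le_add', ← tin_sub_left]
    calc _ ≤ nucNorm (g (X + t • W) - g (X + (0 : ℝ) • W)) * ‖W‖ :=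
          tin_le_nucNorm_mul_norm _ _
      _ ≤ L * ‖(X + t • W) - (X + (0 : ℝ) • W)‖ * ‖W‖ := by gcongr; exact hg _ _
      _ = L * ‖W‖ ^ 2 * t := by
        rw [zero_smul, add_zero, add_sub_cancel_left, norm_smul, Real.norm_of_nonneg ht]
        ring
  have h := apply_one_le_of_hasDerivAt_le_affine hline hslope
  simp only [zero_smul, add_zero, one_smul] at h
  linarith

theorem descent_lemma_step {f : Matrix ι κ ℝ → ℝ} {g : Matrix ι κ ℝ → Matrix ι κ ℝ}
    (hf : ∀ X V, HasDerivAt (fun t : ℝ => f (X + t • V)) (tin (g X) V) 0) {L : ℝ}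
    (hg : ∀ X Y, nucNorm (g X - g Y) ≤ L * ‖X - Y‖) (hL : 0 ≤ L) {η : ℝ} (hη : 0 ≤ η)
    (X : Matrix ι κ ℝ) {D : Matrix ι κ ℝ} (hD : ‖D‖ ≤ 1) :
    f (X - η • D) ≤ f X - η * tin (g X) D + L / 2 * η ^ 2 := by
  have h := descent_lemma hf hg X (-(η • D))
  rw [← sub_eq_add_neg, tin_neg_right, tin_smul_right, norm_neg, norm_smul,
    Real.norm_of_nonneg hη] at h
  have hstep : (η * ‖D‖) ^ 2 ≤ η ^ 2 :=
    pow_le_pow_left₀ (by positivity) (mul_le_of_le_one_right hη hD) 2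
  linarith [mul_le_mul_of_nonneg_left hstep (by positivity : 0 ≤ L / 2)]

end Descent

theorem hasDerivAt_average_line {ι κ : Type*} [Fintype ι] [Fintype κ] {N : ℕ}
    {f : Fin N → Matrix ι κ ℝ → ℝ}
    {g : Fin N → Matrix ι κ ℝ → Matrix ι κ ℝ}
    (hf : ∀ i X V, HasDerivAt (fun t : ℝ => f i (X + t • V)) (tin (g i X) V) 0)
    (X V : Matrix ι κ ℝ) :
    HasDerivAt (fun t : ℝ => (N : ℝ)⁻¹ * ∑ i, f i (X + t • V))
      (tin ((N : ℝ)⁻¹ • ∑ i, g i X) V) 0 := by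
  rw [tin_smul_left, tin_sum_left]
  exact (HasDerivAt.fun_sum fun i _ => hf i X V).const_mul _

theorem nucNorm_average_sub_average_le {ι κ : Type*} [Fintype ι] [Fintype κ] [DecidableEq κ]
    {N : ℕ} (hN : 0 < N) {A B : Fin N → Matrix ι κ ℝ} {r : ℝ}
    (h : ∀ i, nucNorm (A i - B i) ≤ r) :
    nucNorm ((N : ℝ)⁻¹ • ∑ i, A i - (N : ℝ)⁻¹ • ∑ i, B i) ≤ r := by
  rw [← smul_sub, ← Finset.sum_sub_distrib]
  exact nucSeminorm.inv_natCast_smul_sum_le hN h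

section Consensus

variable {N m n : ℕ}

theorem nucNorm_sub_two_mul_le_tin_average (hN : 0 < N) (G : Matrix (Fin m) (Fin n) ℝ)
    {M V D : Fin N → Matrix (Fin m) (Fin n) ℝ} (hD : ∀ i, ‖D i‖ ≤ 1)
    (hVD : ∀ i, tin (V i) (D i) = nucNorm (V i))
    (havg : (N : ℝ)⁻¹ • ∑ i, V i = (N : ℝ)⁻¹ • ∑ i, M i) :
    nucNorm G - 2 * (nucNorm (G - (N : ℝ)⁻¹ • ∑ i, M i)
        + nucNorm (vstack V - vstack (fun _ => (N : ℝ)⁻¹ • ∑ i, V i)))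
      ≤ tin G ((N : ℝ)⁻¹ • ∑ i, D i) := by
  rw [tin_smul_right, tin_sum_right, ← havg]
  refine le_inv_natCast_mul_sum hN fun i => ?_
  set Vb := (N : ℝ)⁻¹ • ∑ i, V i
  have hdev :
      nucNorm (G - V i) ≤ nucNorm (G - Vb) + nucNorm (vstack V - vstack (fun _ => Vb)) := by
    have htri := nucNorm_add_le (G - Vb) (Vb - V i)
    rw [sub_add_sub_cancel, nucNorm_sub_comm Vb] at htri
    linarith [nucNorm_sub_le_nucNorm_vstack_sub V (fun _ => Vb) i]
  linarith [nucNorm_sub_two_mul_nucNorm_sub_le_tin (G := G) (hD i) (hVD i)]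

theorem nucNorm_average_grad_sub_le (hN : 0 < N)
    {g : Fin N → Matrix (Fin m) (Fin n) ℝ → Matrix (Fin m) (Fin n) ℝ} {L δ : ℝ} (hL : 0 ≤ L)
    (hg : ∀ i X Y, nucNorm (g i X - g i Y) ≤ L * ‖X - Y‖) {X : Fin N → Matrix (Fin m) (Fin n) ℝ}
    (hX : ‖vstack X - vstack (fun _ => (N : ℝ)⁻¹ • ∑ i, X i)‖ ≤ δ) :
    nucNorm ((N : ℝ)⁻¹ • ∑ i, g i ((N : ℝ)⁻¹ • ∑ j, X j) - (N : ℝ)⁻¹ • ∑ i, g i (X i))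
      ≤ L * δ :=
  nucNorm_average_sub_average_le hN fun i => (hg i _ _).trans <| by
    rw [norm_sub_rev]
    gcongr
    exact (norm_sub_le_norm_vstack_sub X (fun _ => (N : ℝ)⁻¹ • ∑ i, X i) i).trans hX

end Consensus

theorem stmt13_general {N m n : ℕ} (hN : 0 < N)
    (f : Fin N → Matrix (Fin m) (Fin n) ℝ → ℝ)
    (g : Fin N → Matrix (Fin m) (Fin n) ℝ → Matrix (Fin m) (Fin n) ℝ)
    (hdiff : ∀ i X V, HasDerivAt (fun t : ℝ => f i (X + t • V)) (tin (g i X) V) 0)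
    (L : ℝ) (hL : 0 < L)
    (hLip : ∀ i X Y, nucNorm (g i X - g i Y) ≤ L * specNorm (X - Y))
    (lam η : ℝ) (hη : 0 < η)
    (X M V D : Fin N → Matrix (Fin m) (Fin n) ℝ)
    (hD : ∀ i, specNorm (D i) ≤ 1)
    (hVD : ∀ i, tin (V i) (D i) = nucNorm (V i))
    (havg : (N : ℝ)⁻¹ • ∑ i, V i = (N : ℝ)⁻¹ • ∑ i, M i)
    (hcons : specNorm (vstack X - vstack (fun _ => (N : ℝ)⁻¹ • ∑ i, X i))
      ≤ Real.sqrt N * lam * η / (1 - lam)) :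
    (N : ℝ)⁻¹ * ∑ i, f i (((N : ℝ)⁻¹ • ∑ j, X j) - η • ((N : ℝ)⁻¹ • ∑ j, D j))
      ≤ (N : ℝ)⁻¹ * ∑ i, f i ((N : ℝ)⁻¹ • ∑ j, X j)
        - η * nucNorm ((N : ℝ)⁻¹ • ∑ i, g i (X i))
        + 2 * η * nucNorm (vstack (fun i => g i (X i)) - vstack M)
        + 2 * η * nucNorm (vstack V - vstack (fun _ => (N : ℝ)⁻¹ • ∑ i, V i))
        + (Real.sqrt N * lam / (1 - lam) + 1 / 2) * L * η ^ 2 := by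
  simp only [specNorm_eq_norm] at hD hLip hcons
  set Xb := (N : ℝ)⁻¹ • ∑ j, X j
  set Db := (N : ℝ)⁻¹ • ∑ j, D j
  set gb := (N : ℝ)⁻¹ • ∑ i, g i (X i)
  set Gb := (N : ℝ)⁻¹ • ∑ i, g i Xb
  set δ := Real.sqrt N * lam * η / (1 - lam)
  have hDb : ‖Db‖ ≤ 1 :=
    (normSeminorm ℝ (Matrix (Fin m) (Fin n) ℝ)).inv_natCast_smul_sum_le hN hD
  have hdesc := descent_lemma_step (f := fun Y => (N : ℝ)⁻¹ * ∑ i, f i Y)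
    (g := fun Y => (N : ℝ)⁻¹ • ∑ i, g i Y) (hasDerivAt_average_line hdiff)
    (fun Y Z => nucNorm_average_sub_average_le hN fun i => hLip i Y Z) hL.le hη.le Xb hDb
  have hgrad : nucNorm (Gb - gb) ≤ L * δ := nucNorm_average_grad_sub_le hN hL.le hLip hcons
  have hT1 : nucNorm (gb - (N : ℝ)⁻¹ • ∑ i, M i)
      ≤ nucNorm (vstack (fun i => g i (X i)) - vstack M) :=
    nucNorm_average_sub_average_le hN fun i =>
      nucNorm_sub_le_nucNorm_vstack_sub (fun i => g i (X i)) M i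
  have hdir := nucNorm_sub_two_mul_le_tin_average hN gb hD hVD havg
  have hlin : η * (nucNorm gb - 2 * (nucNorm (vstack (fun i => g i (X i)) - vstack M)
      + nucNorm (vstack V - vstack (fun _ => (N : ℝ)⁻¹ • ∑ i, V i))) - L * δ)
      ≤ η * tin Gb Db := by
    gcongr
    linarith [tin_sub_nucNorm_sub_le_tin (G := Gb) (G' := gb) hDb]
  have hδ : η * (L * δ) = Real.sqrt N * lam / (1 - lam) * L * η ^ 2 := by ring
  linarith

theorem stmt13 {N m n : ℕ} (hN : 0 < N)
    (f : Fin N → Matrix (Fin m) (Fin n) ℝ → ℝ)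
    (g : Fin N → Matrix (Fin m) (Fin n) ℝ → Matrix (Fin m) (Fin n) ℝ)
    (hdiff : ∀ i X V, HasDerivAt (fun t : ℝ => f i (X + t • V)) (tin (g i X) V) 0)
    (L : ℝ) (hL : 0 < L)
    (hLip : ∀ i X Y, nucNorm (g i X - g i Y) ≤ L * specNorm (X - Y))
    (lam η : ℝ) (hlam0 : 0 ≤ lam) (hlam1 : lam < 1) (hη : 0 < η)
    (X M V D : Fin N → Matrix (Fin m) (Fin n) ℝ)
    (hD : ∀ i, specNorm (D i) ≤ 1)
    (hVD : ∀ i, tin (V i) (D i) = nucNorm (V i))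
    (havg : (N : ℝ)⁻¹ • ∑ i, V i = (N : ℝ)⁻¹ • ∑ i, M i)
    (hcons : specNorm (vstack X - vstack (fun _ => (N : ℝ)⁻¹ • ∑ i, X i))
      ≤ Real.sqrt N * lam * η / (1 - lam)) :
    (N : ℝ)⁻¹ * ∑ i, f i (((N : ℝ)⁻¹ • ∑ j, X j) - η • ((N : ℝ)⁻¹ • ∑ j, D j))
      ≤ (N : ℝ)⁻¹ * ∑ i, f i ((N : ℝ)⁻¹ • ∑ j, X j)
        - η * nucNorm ((N : ℝ)⁻¹ • ∑ i, g i (X i))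
        + 2 * η * nucNorm (vstack (fun i => g i (X i)) - vstack M)
        + 2 * η * nucNorm (vstack V - vstack (fun _ => (N : ℝ)⁻¹ • ∑ i, V i))
        + (Real.sqrt N * lam / (1 - lam) + 1 / 2) * L * η ^ 2 :=
  stmt13_general hN f g hdiff L hL hLip lam η hη X M V D hD hVD havg hcons
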